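/- arXiv:2605.00862 — 2 statements merged into one kernel-verified Lean document; each statement's English description precedes it below -/
import Mathlib

section
/- Let (Ω, F, (F_i), Q) be a filtered probability space with discrete times i = 0,…,n, N(t_i) > 0 adapted with integrability, V(t_n) = 0, and suppose for each i there exist F_{t_{i-1}}-measurable initializations with V(t_{i-1})/N(t_{i-1}) = E[H_i(t_i)/N(t_i) | F_{t_{i-1}}], where H_i(t_i) = κ_i + V(t_i) - ε_i and ε_n = 0. Then N(0)·E[∑_{i=1}^n κ_i/N(t_i)] = V(0) + N(0)·E[∑_{i=1}^{n-1} ε_i/N(t_i)]. -/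
/-!
Divide by the numéraire and take expectations. The step hypothesis, integrated, says that
`b (i-1) = a i + b i - c i` for the expectations `a`, `b`, `c` of `κ i / N i`, `V i / N i`,
`ε i / N i`; these identities telescope to `∑ a = b 0 - b n + ∑ c`, where `b 0 = v0 / n0`,
`b n = 0` and the last residual `c n` vanishes.
-/

open MeasureTheory Finset

theorem Finset.sum_Icc_one_eq_sub_add_sum {M : Type*} [AddCommGroup M] {a b c : ℕ → M} (n : ℕ)
    (h : ∀ i ∈ Icc 1 n, b (i - 1) = a i + b i - c i) :
    ∑ i ∈ Icc 1 n, a i = b 0 - b n + ∑ i ∈ Icc 1 n, c i := by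
  induction n with
  | zero => simp
  | succ n ih =>
    have hlast : b n = a (n + 1) + b (n + 1) - c (n + 1) := h (n + 1) (by simp)
    rw [sum_Icc_succ_top (by omega), sum_Icc_succ_top (by omega),
      ih fun i hi => h i (Icc_subset_Icc_right (by omega) hi), hlast]
    abel

theorem Finset.sum_Icc_one_eq_sum_Icc_one_pred {M : Type*} [AddCommMonoid M] {f : ℕ → M}
    (n : ℕ) (hf : f n = 0) : ∑ i ∈ Icc 1 n, f i = ∑ i ∈ Icc 1 (n - 1), f i := by
  cases n with
  | zero => rfl
  | succ n => rw [sum_Icc_succ_top (by omega), hf, add_zero, Nat.add_sub_cancel]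

theorem MeasureTheory.integral_eq_of_ae_eq_condExp {Ω E : Type*} [NormedAddCommGroup E]
    [NormedSpace ℝ E] [CompleteSpace E] {m m0 : MeasurableSpace Ω} {μ : Measure Ω} {f g : Ω → E}
    (hm : m ≤ m0) [SigmaFinite (μ.trim hm)] (h : f =ᵐ[μ] μ[g|m]) :
    ∫ ω, f ω ∂μ = ∫ ω, g ω ∂μ :=
  (integral_congr_ae h).trans (integral_condExp hm)

theorem stmt12_general {Ω : Type*} [m0 : MeasurableSpace Ω] (Q : Measure Ω) [IsProbabilityMeasure Q]
    (n : ℕ) (F : ℕ → MeasurableSpace Ω) (hF : ∀ i, F i ≤ m0)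
    (V N κ ε : ℕ → Ω → ℝ) (v0 n0 : ℝ) (hn0 : 0 < n0)
    (hV0 : ∀ ω, V 0 ω = v0) (hN0 : ∀ ω, N 0 ω = n0)
    (hVn : ∀ ω, V n ω = 0) (hεn : ∀ ω, ε n ω = 0)
    (hint_κ : ∀ i, Integrable (fun ω => κ i ω / N i ω) Q)
    (hint_V : ∀ i, Integrable (fun ω => V i ω / N i ω) Q)
    (hint_ε : ∀ i, Integrable (fun ω => ε i ω / N i ω) Q)
    (hstep : ∀ i ∈ Finset.Icc 1 n,
      (fun ω => V (i - 1) ω / N (i - 1) ω)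
        =ᵐ[Q] Q[fun ω => (κ i ω + V i ω - ε i ω) / N i ω | F (i - 1)]) :
    n0 * ∫ ω, ∑ i ∈ Finset.Icc 1 n, κ i ω / N i ω ∂Q
      = v0 + n0 * ∫ ω, ∑ i ∈ Finset.Icc 1 (n - 1), ε i ω / N i ω ∂Q := by
  have hone_step : ∀ i ∈ Icc 1 n, ∫ ω, V (i - 1) ω / N (i - 1) ω ∂Q =
      (∫ ω, κ i ω / N i ω ∂Q) + (∫ ω, V i ω / N i ω ∂Q) - ∫ ω, ε i ω / N i ω ∂Q := by
    intro i hi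
    rw [integral_eq_of_ae_eq_condExp (hF _) (hstep i hi)]
    simp only [sub_div, add_div]
    rw [integral_sub _ (hint_ε i), integral_add (hint_κ i) (hint_V i)]
    exact (hint_κ i).add (hint_V i)
  have hsum := sum_Icc_one_eq_sub_add_sum (a := fun i => ∫ ω, κ i ω / N i ω ∂Q)
    (b := fun i => ∫ ω, V i ω / N i ω ∂Q) (c := fun i => ∫ ω, ε i ω / N i ω ∂Q) n hone_step
  simp only [hV0, hN0, hVn, integral_const, probReal_univ, one_smul, zero_div, sub_zero] at hsum
  rw [integral_finsetSum _ fun i _ => hint_κ i, integral_finsetSum _ fun i _ => hint_ε i, hsum,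
    sum_Icc_one_eq_sum_Icc_one_pred n (by simp [hεn])]
  field_simp

theorem stmt12 {Ω : Type*} [m0 : MeasurableSpace Ω] (Q : Measure Ω) [IsProbabilityMeasure Q]
    (n : ℕ) (hn : 1 ≤ n) (F : ℕ → MeasurableSpace Ω) (hF : ∀ i, F i ≤ m0)
    (V N κ ε : ℕ → Ω → ℝ) (v0 n0 : ℝ) (hn0 : 0 < n0)
    (hNpos : ∀ i, ∀ᵐ ω ∂Q, 0 < N i ω)
    (hV0 : ∀ ω, V 0 ω = v0) (hN0 : ∀ ω, N 0 ω = n0)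
    (hVn : ∀ ω, V n ω = 0) (hεn : ∀ ω, ε n ω = 0)
    (hint_κ : ∀ i, Integrable (fun ω => κ i ω / N i ω) Q)
    (hint_V : ∀ i, Integrable (fun ω => V i ω / N i ω) Q)
    (hint_ε : ∀ i, Integrable (fun ω => ε i ω / N i ω) Q)
    (hstep : ∀ i ∈ Finset.Icc 1 n,
      (fun ω => V (i - 1) ω / N (i - 1) ω)
        =ᵐ[Q] Q[fun ω => (κ i ω + V i ω - ε i ω) / N i ω | F (i - 1)]) :
    n0 * ∫ ω, ∑ i ∈ Finset.Icc 1 n, κ i ω / N i ω ∂Q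
      = v0 + n0 * ∫ ω, ∑ i ∈ Finset.Icc 1 (n - 1), ε i ω / N i ω ∂Q :=
  stmt12_general (m0 := m0) Q n F hF V N κ ε v0 n0 hn0 hV0 hN0 hVn hεn hint_κ hint_V hint_ε hstep
end

section
/- For x ≥ 0, |e^{-x} - 1 + x| ≤ x²/2. Consequently, with p_i = exp(-r_i·Δt), r_i ≥ 0 bounded by R, and integrable δ_i⁺/N_i, we have |LVA(Δt) + N₀·E[∑_{i=1}^n δ_i⁺·r_i·Δt/N_i]| ≤ (R²Δt²/2)·N₀·E[∑_{i=1}^n δ_i⁺/N_i], i.e., LVA(Δt) = -N₀·E[∑ δ_i⁺·r_i·Δt/N_i] + O(Δt²). -/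
/-!
Since `1 - x ≤ exp (-x) ≤ 1 - x + x ^ 2 / 2` for `x ≥ 0`, each summand
`δ⁺ (exp (-r Δt) - 1) / N + δ⁺ r Δt / N` lies between `0` and `(r Δt) ^ 2 / 2 · δ⁺ / N`,
which is at most `R ^ 2 Δt ^ 2 / 2 · δ⁺ / N`. Summing and integrating this pointwise
bound gives the estimate.
-/

open MeasureTheory

namespace Real

/-- The upper bound follows from `(1 - x + x²/2)(1 + x + x²/2) = 1 + x⁴/4 ≥ 1`. -/
theorem exp_neg_le_one_sub_add_sq_div_two {x : ℝ} (hx : 0 ≤ x) :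
    exp (-x) ≤ 1 - x + x ^ 2 / 2 := by
  have hquad := quadratic_le_exp_of_nonneg hx
  have hinv : exp (-x) * exp x = 1 := by rw [← exp_add, neg_add_cancel, exp_zero]
  nlinarith [exp_pos (-x), sq_nonneg (x - 1), sq_nonneg x]

theorem abs_exp_neg_sub_one_add_le {x : ℝ} (hx : 0 ≤ x) :
    |exp (-x) - 1 + x| ≤ x ^ 2 / 2 := by
  rw [abs_of_nonneg (by linarith [one_sub_le_exp_neg x])]
  linarith [exp_neg_le_one_sub_add_sq_div_two hx]

end Real

theorem abs_div_mul_exp_neg_sub_one_add_le {a N r R t : ℝ} (ha : 0 ≤ a) (hN : 0 ≤ N)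
    (hr : 0 ≤ r) (hrR : r ≤ R) (ht : 0 ≤ t) :
    |a * (Real.exp (-(r * t)) - 1) / N + a * r * t / N| ≤ R ^ 2 * t ^ 2 / 2 * (a / N) := by
  have hsplit : a * (Real.exp (-(r * t)) - 1) / N + a * r * t / N
      = a / N * (Real.exp (-(r * t)) - 1 + r * t) := by ring
  have hsq : (r * t) ^ 2 ≤ (R * t) ^ 2 := by gcongr
  rw [hsplit, abs_mul, abs_of_nonneg (div_nonneg ha hN), mul_comm _ (a / N)]
  gcongr
  calc |Real.exp (-(r * t)) - 1 + r * t| ≤ (r * t) ^ 2 / 2 :=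
        Real.abs_exp_neg_sub_one_add_le (mul_nonneg hr ht)
    _ ≤ R ^ 2 * t ^ 2 / 2 := by rw [← mul_pow]; linarith

theorem Finset.abs_sum_add_sum_le_mul_sum {ι : Type*} (s : Finset ι) {f g h : ι → ℝ} {c : ℝ}
    (hfg : ∀ i ∈ s, |f i + g i| ≤ c * h i) :
    |∑ i ∈ s, f i + ∑ i ∈ s, g i| ≤ c * ∑ i ∈ s, h i := by
  rw [← Finset.sum_add_distrib, Finset.mul_sum]
  exact (Finset.abs_sum_le_sum_abs _ _).trans (Finset.sum_le_sum hfg)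

theorem MeasureTheory.abs_integral_add_integral_le_mul_integral {Ω : Type*}
    [MeasurableSpace Ω] {μ : Measure Ω} {f g h : Ω → ℝ} {c : ℝ}
    (hf : Integrable f μ) (hg : Integrable g μ) (hh : Integrable h μ)
    (hfg : ∀ᵐ ω ∂μ, |f ω + g ω| ≤ c * h ω) :
    |∫ ω, f ω ∂μ + ∫ ω, g ω ∂μ| ≤ c * ∫ ω, h ω ∂μ := by
  rw [← integral_add hf hg, ← integral_const_mul]
  exact norm_integral_le_of_norm_le (f := f + g) (hh.const_mul c) hfg

theorem stmt17_general {Ω : Type*} [MeasurableSpace Ω] (Q : Measure Ω)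
    (n : ℕ) (δ N r : Fin n → Ω → ℝ) (N₀ R Δt : ℝ)
    (hN₀ : 0 < N₀) (hΔt : 0 ≤ Δt)
    (hNpos : ∀ i ω, 0 < N i ω)
    (hr : ∀ i ω, 0 ≤ r i ω ∧ r i ω ≤ R)
    (hint1 : Integrable (fun ω => ∑ i, max (δ i ω) 0 / N i ω) Q)
    (hint2 : Integrable (fun ω => ∑ i, max (δ i ω) 0 * r i ω * Δt / N i ω) Q)
    (hint3 : Integrable
      (fun ω => ∑ i, max (δ i ω) 0 * (Real.exp (-(r i ω * Δt)) - 1) / N i ω) Q) :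
    (∀ x : ℝ, 0 ≤ x → |Real.exp (-x) - 1 + x| ≤ x ^ 2 / 2) ∧
    |N₀ * (∫ ω, ∑ i, max (δ i ω) 0 * (Real.exp (-(r i ω * Δt)) - 1) / N i ω ∂Q)
        + N₀ * (∫ ω, ∑ i, max (δ i ω) 0 * r i ω * Δt / N i ω ∂Q)|
      ≤ (R ^ 2 * Δt ^ 2 / 2) * (N₀ * ∫ ω, ∑ i, max (δ i ω) 0 / N i ω ∂Q) := by
  refine ⟨fun x hx => Real.abs_exp_neg_sub_one_add_le hx, ?_⟩
  have hpointwise : ∀ ω,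
      |∑ i, max (δ i ω) 0 * (Real.exp (-(r i ω * Δt)) - 1) / N i ω
        + ∑ i, max (δ i ω) 0 * r i ω * Δt / N i ω|
      ≤ R ^ 2 * Δt ^ 2 / 2 * ∑ i, max (δ i ω) 0 / N i ω := fun ω =>
    Finset.abs_sum_add_sum_le_mul_sum _ fun i _ =>
      abs_div_mul_exp_neg_sub_one_add_le (le_max_right _ _) (hNpos i ω).le (hr i ω).1
        (hr i ω).2 hΔt
  have hintegral := abs_integral_add_integral_le_mul_integral hint3 hint2 hint1
    (ae_of_all Q hpointwise)
  rw [← mul_add, abs_mul, abs_of_pos hN₀, mul_left_comm]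
  exact mul_le_mul_of_nonneg_left hintegral hN₀.le

theorem stmt17 {Ω : Type*} [MeasurableSpace Ω] (Q : Measure Ω) [IsProbabilityMeasure Q]
    (n : ℕ) (δ N r : Fin n → Ω → ℝ) (N₀ R Δt : ℝ)
    (hN₀ : 0 < N₀) (hΔt : 0 ≤ Δt) (hR : 0 ≤ R)
    (hNpos : ∀ i ω, 0 < N i ω)
    (hr : ∀ i ω, 0 ≤ r i ω ∧ r i ω ≤ R)
    (hint1 : Integrable (fun ω => ∑ i, max (δ i ω) 0 / N i ω) Q)
    (hint2 : Integrable (fun ω => ∑ i, max (δ i ω) 0 * r i ω * Δt / N i ω) Q)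
    (hint3 : Integrable
      (fun ω => ∑ i, max (δ i ω) 0 * (Real.exp (-(r i ω * Δt)) - 1) / N i ω) Q) :
    (∀ x : ℝ, 0 ≤ x → |Real.exp (-x) - 1 + x| ≤ x ^ 2 / 2) ∧
    |N₀ * (∫ ω, ∑ i, max (δ i ω) 0 * (Real.exp (-(r i ω * Δt)) - 1) / N i ω ∂Q)
        + N₀ * (∫ ω, ∑ i, max (δ i ω) 0 * r i ω * Δt / N i ω ∂Q)|
      ≤ (R ^ 2 * Δt ^ 2 / 2) * (N₀ * ∫ ω, ∑ i, max (δ i ω) 0 / N i ω ∂Q) :=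
  stmt17_general Q n δ N r N₀ R Δt hN₀ hΔt hNpos hr hint1 hint2 hint3
end
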